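/- Let ρ ≥ 2 + √6, let T ≥ 2 and n ≥ 1 be integers, and let K ⊆ {0,…,T−1} be a set with T−1 ∈ K and t₁ := min K < T−1. For each k ∈ K let d_k ∈ ℝⁿ be a unit vector, and define x_t := Σ_{k∈K, k<t} ρ^{t−k−1} d_k for t = 0,…,T−1. Then ‖x_{T−1}‖₂ > Σ_{t=0}^{T−2} ‖x_t‖₂. -/

import Mathlib

/-!
Write `g i = 1 + ρ + ⋯ + ρ^(i-1)` and `t₁ = min K`. The vector `x_t` is a sum of unit vectors
scaled by distinct powers `ρ^j` with `j < t - t₁`, so `‖x_t‖ ≤ g (t - t₁)`. In `x_{T-1}` the term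
`ρ^m d_{t₁}`, `m = T - 2 - t₁`, dominates: the remaining terms have norm at most `g m`.
So it suffices that `g 0 + ⋯ + g m + g m < ρ^m`. This holds by induction on `m` as soon as
`ρ ≥ 4`: then `g i ≤ ρ^i`, so the left side grows by `g (m+1) + ρ^m ≤ 3 ρ^m` and the right side
by `(ρ - 1) ρ^m`.
-/

open scoped BigOperators

/-- Euclidean norm of a vector in `ℝ^k`. -/
noncomputable def e2norm {k : ℕ} (v : Fin k → ℝ) : ℝ := Real.sqrt (∑ i, (v i) ^ 2)

open Finset

lemma geom_sum_le_pow {ρ : ℝ} (hρ : 2 ≤ ρ) (m : ℕ) : ∑ j ∈ range m, ρ ^ j ≤ ρ ^ m := by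
  induction m with
  | zero => simp
  | succ m ih =>
    rw [sum_range_succ, pow_succ]
    nlinarith [pow_pos (by linarith : (0 : ℝ) < ρ) m]

lemma sum_range_succ_geom_sum_add_lt_pow {ρ : ℝ} (hρ : 4 ≤ ρ) (m : ℕ) :
    ∑ s ∈ range (m + 1), ∑ j ∈ range s, ρ ^ j + ∑ j ∈ range m, ρ ^ j < ρ ^ m := by
  induction m with
  | zero => simp
  | succ m ih =>
    have hg := geom_sum_le_pow (by linarith : (2 : ℝ) ≤ ρ) m
    have hpos := pow_pos (by linarith : (0 : ℝ) < ρ) m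
    have h4 : 4 * ρ ^ m ≤ ρ ^ m * ρ := by nlinarith
    rw [sum_range_succ _ (m + 1), sum_range_succ (fun j => ρ ^ j) m, pow_succ]
    linarith

lemma sum_range_add_tsub {M : Type*} [AddCommMonoid M] (f : ℕ → M) (hf : f 0 = 0) (a n : ℕ) :
    ∑ t ∈ range (a + n), f (t - a) = ∑ s ∈ range n, f s := by
  rw [sum_range_add, sum_eq_zero fun t ht => by rw [Nat.sub_eq_zero_of_le (mem_range.1 ht).le, hf]]
  simp

/-- Closed form of `x₀ = 0`, `x_{t+1} = ρ x_t + d_t`, where `d_t = 0` for `t ∉ K`. -/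
def trajectory {E : Type*} [AddCommMonoid E] [Module ℝ E] (ρ : ℝ) (d : ℕ → E) (K : Finset ℕ)
    (t : ℕ) : E :=
  ∑ k ∈ K.filter (· < t), ρ ^ (t - k - 1) • d k

section Normed

variable {E : Type*} [SeminormedAddCommGroup E] [NormedSpace ℝ E]
  {ρ : ℝ} {d : ℕ → E} {K : Finset ℕ}

lemma norm_sum_pow_smul_le (hρ : 0 ≤ ρ) (hd : ∀ k ∈ K, ‖d k‖ = 1) {S : Finset ℕ} (hS : S ⊆ K)
    {a t : ℕ} (hSa : ∀ k ∈ S, a ≤ k ∧ k < t) :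
    ‖∑ k ∈ S, ρ ^ (t - k - 1) • d k‖ ≤ ∑ j ∈ range (t - a), ρ ^ j := by
  have hinj : Set.InjOn (fun k => t - k - 1) S := fun k hk l hl hkl => by
    have := hSa k hk; have := hSa l hl; simp only at hkl; omega
  calc ‖∑ k ∈ S, ρ ^ (t - k - 1) • d k‖
      ≤ ∑ k ∈ S, ρ ^ (t - k - 1) := by
        refine (norm_sum_le _ _).trans_eq (sum_congr rfl fun k hk => ?_)
        rw [norm_smul, hd k (hS hk), mul_one, Real.norm_of_nonneg (pow_nonneg hρ _)]
    _ = ∑ j ∈ S.image (fun k => t - k - 1), ρ ^ j := (sum_image hinj).symm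
    _ ≤ ∑ j ∈ range (t - a), ρ ^ j := by
        refine sum_le_sum_of_subset_of_nonneg ?_ fun j _ _ => pow_nonneg hρ j
        intro j hj
        obtain ⟨k, hk, rfl⟩ := mem_image.1 hj
        have := hSa k hk
        exact mem_range.2 (by omega)

lemma norm_trajectory_le (hρ : 0 ≤ ρ) (hd : ∀ k ∈ K, ‖d k‖ = 1) {a : ℕ} (ha : ∀ k ∈ K, a ≤ k)
    (t : ℕ) : ‖trajectory ρ d K t‖ ≤ ∑ j ∈ range (t - a), ρ ^ j :=
  norm_sum_pow_smul_le hρ hd (filter_subset _ _) fun k hk =>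
    ⟨ha k (mem_filter.1 hk).1, (mem_filter.1 hk).2⟩

lemma pow_sub_geom_sum_le_norm_trajectory (hρ : 0 ≤ ρ) (hd : ∀ k ∈ K, ‖d k‖ = 1) {a m : ℕ}
    (haK : a ∈ K) (ha : ∀ k ∈ K, a ≤ k) :
    ρ ^ m - ∑ j ∈ range m, ρ ^ j ≤ ‖trajectory ρ d K (a + (m + 1))‖ := by
  set S := K.filter (· < a + (m + 1))
  have haS : a ∈ S := mem_filter.2 ⟨haK, by omega⟩
  have hrest := norm_sum_pow_smul_le hρ hd ((erase_subset a S).trans (filter_subset _ K))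
    (a := a + 1) (t := a + (m + 1)) fun k hk => by
      simp only [S, mem_erase, mem_filter] at hk
      have := ha k hk.2.1
      omega
  have hlead : ‖ρ ^ (a + (m + 1) - a - 1) • d a‖ = ρ ^ m := by
    rw [norm_smul, hd a haK, mul_one, Real.norm_of_nonneg (pow_nonneg hρ _)]
    congr 1; omega
  rw [show a + (m + 1) - (a + 1) = m by omega] at hrest
  rw [trajectory, ← add_sum_erase _ _ haS]
  linarith [norm_sub_le_norm_add (ρ ^ (a + (m + 1) - a - 1) • d a)
    (∑ k ∈ S.erase a, ρ ^ (a + (m + 1) - k - 1) • d k)]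

theorem sum_norm_trajectory_lt (hρ : 4 ≤ ρ) (hd : ∀ k ∈ K, ‖d k‖ = 1) {a N : ℕ} (haK : a ∈ K)
    (ha : ∀ k ∈ K, a ≤ k) (haN : a < N) :
    ∑ t ∈ range N, ‖trajectory ρ d K t‖ < ‖trajectory ρ d K N‖ := by
  obtain ⟨m, rfl⟩ : ∃ m, N = a + (m + 1) := ⟨N - a - 1, by omega⟩
  calc ∑ t ∈ range (a + (m + 1)), ‖trajectory ρ d K t‖
      ≤ ∑ t ∈ range (a + (m + 1)), ∑ j ∈ range (t - a), ρ ^ j :=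
        sum_le_sum fun t _ => norm_trajectory_le (by linarith) hd ha t
    _ = ∑ s ∈ range (m + 1), ∑ j ∈ range s, ρ ^ j :=
        sum_range_add_tsub (fun s => ∑ j ∈ range s, ρ ^ j) (by simp) a (m + 1)
    _ < ρ ^ m - ∑ j ∈ range m, ρ ^ j := by
        linarith [sum_range_succ_geom_sum_add_lt_pow hρ m]
    _ ≤ ‖trajectory ρ d K (a + (m + 1))‖ :=
        pow_sub_geom_sum_le_norm_trajectory (by linarith) hd haK ha

end Normed

lemma e2norm_eq_norm_toLp {k : ℕ} (v : Fin k → ℝ) : e2norm v = ‖WithLp.toLp 2 v‖ := by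
  simp [EuclideanSpace.norm_eq, e2norm]

lemma toLp_trajectory {k : ℕ} (ρ : ℝ) (d : ℕ → Fin k → ℝ) (K : Finset ℕ) (t : ℕ) :
    WithLp.toLp 2 (trajectory ρ d K t) = trajectory ρ (fun k => WithLp.toLp 2 (d k)) K t := by
  simp [trajectory, WithLp.toLp_sum, WithLp.toLp_smul]

theorem unstable_trajectory_inequality_general
    (ρ : ℝ) (hρ : 2 + Real.sqrt 6 ≤ ρ)
    (T n : ℕ)
    (K : Finset ℕ)
    (hlast : T - 1 ∈ K)
    (hmin : K.min' ⟨T - 1, hlast⟩ < T - 1)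
    (d : ℕ → (Fin n → ℝ)) (hd : ∀ k ∈ K, e2norm (d k) = 1)
    (x : ℕ → (Fin n → ℝ))
    (hx : ∀ t < T, x t = ∑ k ∈ K.filter (fun k => k < t), ρ ^ (t - k - 1) • d k) :
    ∑ t ∈ Finset.range (T - 1), e2norm (x t) < e2norm (x (T - 1)) := by
  have hρ4 : 4 ≤ ρ := by
    have : 2 ≤ Real.sqrt 6 := Real.le_sqrt_of_sq_le (by norm_num)
    linarith
  have hnorm : ∀ t < T, e2norm (x t) = ‖trajectory ρ (fun k => WithLp.toLp 2 (d k)) K t‖ :=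
    fun t ht => by rw [hx t ht, e2norm_eq_norm_toLp, ← toLp_trajectory, trajectory]
  rw [sum_congr rfl fun t ht => hnorm t (by have := mem_range.1 ht; omega), hnorm _ (by omega)]
  exact sum_norm_trajectory_lt hρ4 (fun k hk => by rw [← e2norm_eq_norm_toLp, hd k hk])
    (K.min'_mem _) K.min'_le hmin

/-- key deterministic inequality for the unstable counterexample.
Let `ρ ≥ 2 + √6`, `T ≥ 2`, `n ≥ 1`, `K ⊆ {0,…,T−1}` with `T−1 ∈ K` and `min K < T−1`.
For unit vectors `d_k` (`k ∈ K`) and `x_t := Σ_{k∈K, k<t} ρ^{t−k−1} d_k`, we have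
`‖x_{T−1}‖₂ > Σ_{t=0}^{T−2} ‖x_t‖₂`. -/
theorem unstable_trajectory_inequality
    (ρ : ℝ) (hρ : 2 + Real.sqrt 6 ≤ ρ)
    (T n : ℕ) (hT : 2 ≤ T) (hn : 1 ≤ n)
    (K : Finset ℕ) (hKsub : K ⊆ Finset.range T)
    (hlast : T - 1 ∈ K)
    (hmin : K.min' ⟨T - 1, hlast⟩ < T - 1)
    (d : ℕ → (Fin n → ℝ)) (hd : ∀ k ∈ K, e2norm (d k) = 1)
    (x : ℕ → (Fin n → ℝ))
    (hx : ∀ t < T, x t = ∑ k ∈ K.filter (fun k => k < t), ρ ^ (t - k - 1) • d k) :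
    ∑ t ∈ Finset.range (T - 1), e2norm (x t) < e2norm (x (T - 1)) :=
  unstable_trajectory_inequality_general ρ hρ T n K hlast hmin d hd x hx
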